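/- arXiv:2303.15627 — 4 statements merged into one kernel-verified Lean document; each statement's English description precedes it below -/
import Mathlib

section
/- If a differentiable convex function r is η-area convex with respect to an operator g (i.e., η⟨g(z') - g(z), z' - z⁺⟩ ≤ r(z) + r(z') + r(z⁺) - 3r((z+z'+z⁺)/3) for all z, z', z⁺ ∈ Z), then g is (1/η)-relaxed relatively Lipschitz with respect to r, i.e., η⟨g(z') - g(z), z' - z⁺⟩ ≤ V^r_z(z') + V^r_{z'}(z⁺) + V^r_z(z⁺) for all z, z', z⁺ ∈ Z. -/
open scoped RealInnerProductSpace

lemma grad_ineq_aux {n : ℕ} {Z : Set (EuclideanSpace ℝ (Fin n))}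
    {r : EuclideanSpace ℝ (Fin n) → ℝ} {G : EuclideanSpace ℝ (Fin n)}
    (hconv : ConvexOn ℝ Z r) {x y : EuclideanSpace ℝ (Fin n)}
    (hx : x ∈ Z) (hy : y ∈ Z) (hgrad : HasGradientAt r G x) :
    r x + ⟪G, y - x⟫ ≤ r y := by
  set φ : ℝ → ℝ := fun t => r (x + t • (y - x)) with hφdef
  have hline : HasDerivAt (fun t : ℝ => x + t • (y - x)) (y - x) (0 : ℝ) := by
    simpa using ((hasDerivAt_id (0:ℝ)).smul_const (y - x)).const_add x
  have hφ : HasDerivAt φ ⟪G, y - x⟫ 0 := by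
    have h0 : x + (0:ℝ) • (y - x) = x := by simp
    have hg' : HasFDerivAt r ((InnerProductSpace.toDual ℝ (EuclideanSpace ℝ (Fin n))) G)
        (x + (0:ℝ) • (y - x)) := by rw [h0]; exact hgrad.hasFDerivAt
    have := hg'.comp_hasDerivAt 0 hline
    exact this
  have htend : Filter.Tendsto (slope φ 0) (nhdsWithin 0 (Set.Ioi 0)) (nhds ⟪G, y - x⟫) :=
    (hasDerivAt_iff_tendsto_slope.mp hφ).mono_left
      (nhdsWithin_mono _ (fun t ht => ne_of_gt ht))
  have hbound : ∀ᶠ t in nhdsWithin (0:ℝ) (Set.Ioi 0), slope φ 0 t ≤ r y - r x := by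
    filter_upwards [Ioc_mem_nhdsGT_of_mem (Set.left_mem_Ico.mpr one_pos)] with t ht
    have h2 : x + t • (y - x) = (1 - t) • x + t • y := by module
    have h3 : φ t ≤ (1 - t) * r x + t * r y := by
      rw [hφdef]; simp only [h2]
      exact hconv.2 hx hy (by linarith [ht.2]) ht.1.le (by ring)
    have h4 : φ 0 = r x := by simp [hφdef]
    rw [slope_def_field, h4]
    rw [div_le_iff₀ (by linarith [ht.1] : (0:ℝ) < t - 0)]
    nlinarith [ht.1]
  have := le_of_tendsto htend hbound
  linarith

/-- Area convexity implies relaxed relative Lipschitzness. -/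
theorem areaConvex_implies_relaxed {n : ℕ} (Z : Set (EuclideanSpace ℝ (Fin n)))
    (hZ : Convex ℝ Z)
    (r : EuclideanSpace ℝ (Fin n) → ℝ)
    (r' : EuclideanSpace ℝ (Fin n) → EuclideanSpace ℝ (Fin n))
    (hconv : ConvexOn ℝ Z r)
    (hdiff : ∀ x ∈ Z, HasGradientAt r (r' x) x)
    (V : EuclideanSpace ℝ (Fin n) → EuclideanSpace ℝ (Fin n) → ℝ)
    (hV : ∀ x x', V x x' = r x' - r x - ⟪r' x, x' - x⟫)
    (g : EuclideanSpace ℝ (Fin n) → EuclideanSpace ℝ (Fin n))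
    (η : ℝ) (hη : 0 < η)
    (hac : ∀ z ∈ Z, ∀ z' ∈ Z, ∀ zp ∈ Z,
      η * ⟪g z' - g z, z' - zp⟫
        ≤ r z + r z' + r zp - 3 * r ((3 : ℝ)⁻¹ • (z + z' + zp))) :
    ∀ z ∈ Z, ∀ z' ∈ Z, ∀ zp ∈ Z,
      η * ⟪g z' - g z, z' - zp⟫ ≤ V z z' + V z' zp + V z zp := by
  intro z hz z' hz' zp hzp
  set m : EuclideanSpace ℝ (Fin n) := (3 : ℝ)⁻¹ • (z + z' + zp) with hm
  have hw : (1/2 : ℝ) • z + (1/2 : ℝ) • z' ∈ Z :=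
    hZ hz hz' (by norm_num) (by norm_num) (by norm_num)
  have hmZ : m ∈ Z := by
    have := hZ hw hzp (by norm_num : (0:ℝ) ≤ 2/3) (by norm_num : (0:ℝ) ≤ 1/3) (by norm_num)
    have heq : (2/3 : ℝ) • ((1/2 : ℝ) • z + (1/2 : ℝ) • z') + (1/3 : ℝ) • zp = m := by
      rw [hm]; module
    rwa [heq] at this
  have ineq1 : r z + ⟪r' z, m - z⟫ ≤ r m := grad_ineq_aux hconv hz hmZ (hdiff z hz)
  have ineq2 : r z' + ⟪r' z', zp - z'⟫ ≤ r zp := grad_ineq_aux hconv hz' hzp (hdiff z' hz')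
  have e1 : ⟪r' z, m - z⟫ = (3:ℝ)⁻¹ * (⟪r' z, z' - z⟫ + ⟪r' z, zp - z⟫) := by
    have : m - z = (3:ℝ)⁻¹ • ((z' - z) + (zp - z)) := by rw [hm]; module
    rw [this, inner_smul_right, inner_add_right]
  have hmain := hac z hz z' hz' zp hzp
  rw [hV, hV, hV]
  rw [e1] at ineq1
  rw [← hm] at hmain
  linarith
end

section
/- For any scalars a, b > 0 and v ∈ ℝ with |a - b| ≤ ε·a for some ε ∈ (0,1), one has |med(v/a, -1, 1) - med(v/b, -1, 1)| ≤ ε, where med(t, -1, 1) := max(-1, min(t, 1)). -/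
/-!
Write `c t = max (-1) (min t 1)`. For `v ≥ 0` and `a, b > 0`,
`|c (v / a) - c (v / b)| ≤ |a - b| / a`: while `v ≤ b` this is the `1`-Lipschitz property of `c`,
since `|v / a - v / b| = v |a - b| / (a b)`; once `v > b` we have `c (v / b) = 1` and
`c (v / a) ≥ min (b / a) 1`. The case `v < 0` follows because `c` is odd.
-/

def clampUnit (t : ℝ) : ℝ := max (-1) (min t 1)

lemma clampUnit_neg (t : ℝ) : clampUnit (-t) = -clampUnit t := by
  simp only [clampUnit]
  grind

lemma clampUnit_le_one (t : ℝ) : clampUnit t ≤ 1 :=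
  max_le (by norm_num) (min_le_right _ _)

lemma clampUnit_of_one_le {t : ℝ} (ht : 1 ≤ t) : clampUnit t = 1 := by
  rw [clampUnit, min_eq_right ht, max_eq_right (by norm_num)]

lemma abs_clampUnit_sub_clampUnit_le (s t : ℝ) :
    |clampUnit s - clampUnit t| ≤ |s - t| := by
  simp only [clampUnit, max_comm (-1 : ℝ)]
  calc |max (min s 1) (-1) - max (min t 1) (-1)|
      ≤ |min s 1 - min t 1| := abs_max_sub_max_le_abs _ _ _
    _ ≤ max |s - t| |(1 : ℝ) - 1| := abs_min_sub_min_le_max _ _ _ _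
    _ = |s - t| := by simp

lemma abs_clampUnit_div_sub_clampUnit_div_le_of_nonneg {a b v : ℝ} (ha : 0 < a) (hb : 0 < b)
    (hv : 0 ≤ v) : |clampUnit (v / a) - clampUnit (v / b)| ≤ |a - b| / a := by
  rcases le_or_gt v b with hvb | hbv
  · refine (abs_clampUnit_sub_clampUnit_le _ _).trans ?_
    calc |v / a - v / b| = v * |a - b| / (a * b) := by
          rw [div_sub_div _ _ ha.ne' hb.ne', abs_div, abs_of_pos (mul_pos ha hb),
            show v * b - a * v = v * (b - a) by ring, abs_mul, abs_of_nonneg hv, abs_sub_comm]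
      _ ≤ b * |a - b| / (a * b) := by gcongr
      _ = |a - b| / a := by field_simp
  · have hb1 : clampUnit (v / b) = 1 := clampUnit_of_one_le ((one_le_div hb).mpr hbv.le)
    have hlower : 1 - |a - b| / a ≤ clampUnit (v / a) := by
      refine le_max_of_le_right (le_min ?_ ?_)
      · calc 1 - |a - b| / a ≤ 1 - (a - b) / a := by gcongr; exact le_abs_self _
          _ = b / a := by field_simp; ring
          _ ≤ v / a := by gcongr
      · linarith [div_nonneg (abs_nonneg (a - b)) ha.le]
    rw [hb1, abs_sub_le_iff]
    constructor <;> linarith [clampUnit_le_one (v / a)]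

lemma abs_clampUnit_div_sub_clampUnit_div_le {a b : ℝ} (ha : 0 < a) (hb : 0 < b) (v : ℝ) :
    |clampUnit (v / a) - clampUnit (v / b)| ≤ |a - b| / a := by
  rcases le_total 0 v with hv | hv
  · exact abs_clampUnit_div_sub_clampUnit_div_le_of_nonneg ha hb hv
  · have := abs_clampUnit_div_sub_clampUnit_div_le_of_nonneg ha hb (neg_nonneg.mpr hv)
    rwa [neg_div, neg_div, clampUnit_neg, clampUnit_neg, neg_sub_neg,
      abs_sub_comm (clampUnit _)] at this

theorem med_ratio_stability_general (a b v ε : ℝ) (ha : 0 < a) (hb : 0 < b)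
    (hab : |a - b| ≤ ε * a) :
    |max (-1) (min (v / a) 1) - max (-1) (min (v / b) 1)| ≤ ε :=
  (abs_clampUnit_div_sub_clampUnit_div_le ha hb v).trans ((div_le_iff₀ ha).mpr hab)

/-- Stability of the truncated ratio under multiplicative perturbation of the denominator. -/
theorem med_ratio_stability (a b v ε : ℝ) (ha : 0 < a) (hb : 0 < b)
    (hε : ε ∈ Set.Ioo (0 : ℝ) 1) (hab : |a - b| ≤ ε * a) :
    |max (-1) (min (v / a) 1) - max (-1) (min (v / b) 1)| ≤ ε :=
  med_ratio_stability_general a b v ε ha hb hab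
end

section
/- Let r(x, y) := ⟨|A|y, x²⟩ + α h(y) on Z := [-1,1]^n × Δ^d, where |A| denotes the entrywise absolute value of A ∈ ℝ^{n×d}, x² is entrywise squaring, h is negative entropy, α ≥ 0, and ‖A‖_{1→1} ≤ 1 (each column has ℓ₁ norm at most 1). Then z₀ := (0, (1/d)𝟙) minimizes r over Z, and for all u ∈ Z the Bregman divergence satisfies V^r_{z₀}(u) ≤ 1 + α log d. -/
/-- Tangent-line lower bound for t ↦ t·log t at s. -/
lemma entropy_tangent (s t : ℝ) (hs : 0 < s) (ht : 0 ≤ t) :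
    s * Real.log s + (Real.log s + 1) * (t - s) ≤ t * Real.log t := by
  rcases eq_or_lt_of_le ht with h | h
  · simp only [← h]
    nlinarith [Real.log_le_sub_one_of_pos hs]
  · have hlog : Real.log (s / t) ≤ s / t - 1 := Real.log_le_sub_one_of_pos (by positivity)
    rw [Real.log_div (ne_of_gt hs) (ne_of_gt h)] at hlog
    have heq : s / t - 1 = (s - t) / t := by field_simp
    rw [heq, le_div_iff₀ h] at hlog
    nlinarith

/-- The regularizer r(x,y) = ⟨|A|y, x²⟩ + α h(y) is minimized at (0, uniform)
and the Bregman divergence from this point is at most 1 + α log d. -/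
theorem box_simplex_regularizer_range {n d : ℕ} (hd : 1 ≤ d)
    (A : Matrix (Fin n) (Fin d) ℝ) (α : ℝ) (hα : 0 ≤ α)
    (hA : ∀ j, ∑ i, |A i j| ≤ 1)
    (r : (Fin n → ℝ) → (Fin d → ℝ) → ℝ)
    (hr : ∀ x y, r x y = (∑ i, (∑ j, |A i j| * y j) * x i ^ 2)
      + α * ∑ j, y j * Real.log (y j))
    (x0 : Fin n → ℝ) (hx0 : ∀ i, x0 i = 0)
    (y0 : Fin d → ℝ) (hy0 : ∀ j, y0 j = 1 / d) :
    (∀ x y, (∀ i, x i ∈ Set.Icc (-1 : ℝ) 1) → (∀ j, 0 ≤ y j) → (∑ j, y j = 1) →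
      r x0 y0 ≤ r x y) ∧
    (∀ x y, (∀ i, x i ∈ Set.Icc (-1 : ℝ) 1) → (∀ j, 0 ≤ y j) → (∑ j, y j = 1) →
      r x y - r x0 y0 - ∑ j, (α * (Real.log (1 / d) + 1)) * (y j - y0 j)
        ≤ 1 + α * Real.log d) := by
  have hdpos : (0:ℝ) < d := by exact_mod_cast Nat.lt_of_lt_of_le Nat.zero_lt_one hd
  have hspos : (0:ℝ) < 1 / d := by positivity
  -- value at z0
  have hr0 : r x0 y0 = α * (- Real.log d) := by
    rw [hr]
    have h1 : ∀ i, (∑ j, |A i j| * y0 j) * x0 i ^ 2 = 0 := by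
      intro i; rw [hx0]; ring
    rw [Finset.sum_congr rfl (fun i _ => h1 i)]
    have : ∀ j : Fin d, y0 j * Real.log (y0 j) = (1/d) * Real.log (1/d) := by
      intro j; rw [hy0]
    rw [Finset.sum_congr rfl (fun j _ => this j), Finset.sum_const, Finset.card_fin,
      Real.log_div one_ne_zero (ne_of_gt hdpos), Real.log_one, nsmul_eq_mul]
    rw [Finset.sum_const, Finset.card_fin, nsmul_eq_mul]
    field_simp
    ring
  -- entropy lower bound on simplex
  have hent : ∀ (y : Fin d → ℝ), (∀ j, 0 ≤ y j) → (∑ j, y j = 1) →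
      - Real.log d ≤ ∑ j, y j * Real.log (y j) := by
    intro y hy hsum
    have key : ∀ j : Fin d,
        (1/d) * Real.log (1/d) + (Real.log (1/d) + 1) * (y j - 1/d)
          ≤ y j * Real.log (y j) := fun j => entropy_tangent _ _ hspos (hy j)
    have hsum2 := Finset.sum_le_sum (fun j (_ : j ∈ Finset.univ) => key j)
    have hcard : (Finset.univ : Finset (Fin d)).card = d := by simp
    have hL : ∑ j : Fin d, ((1/d) * Real.log (1/d)
        + (Real.log (1/d) + 1) * (y j - 1/d)) = - Real.log d := by
      have h0 : ∑ j : Fin d, (y j - 1/(d:ℝ)) = 0 := by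
        rw [Finset.sum_sub_distrib, hsum, Finset.sum_const, hcard, nsmul_eq_mul]
        field_simp
        ring
      have h1 : ∑ j : Fin d, (Real.log (1/d) + 1) * (y j - 1/(d:ℝ)) = 0 := by
        rw [← Finset.mul_sum, h0, mul_zero]
      rw [Finset.sum_add_distrib, h1, add_zero, Finset.sum_const, hcard, nsmul_eq_mul,
        Real.log_div one_ne_zero (ne_of_gt hdpos), Real.log_one]
      field_simp
      ring
    linarith [hL ▸ hsum2]
  constructor
  · intro x y hx hy hsum
    rw [hr0, hr]
    have h1 : 0 ≤ ∑ i, (∑ j, |A i j| * y j) * x i ^ 2 := by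
      apply Finset.sum_nonneg; intro i _
      apply mul_nonneg
      · exact Finset.sum_nonneg fun j _ => mul_nonneg (abs_nonneg _) (hy j)
      · positivity
    have h2 := hent y hy hsum
    nlinarith
  · intro x y hx hy hsum
    have hzero : ∑ j, (α * (Real.log (1 / d) + 1)) * (y j - y0 j) = 0 := by
      rw [← Finset.mul_sum, Finset.sum_sub_distrib, hsum]
      have : ∑ j, y0 j = 1 := by
        rw [Finset.sum_congr rfl fun j _ => hy0 j, Finset.sum_const, Finset.card_fin,
          nsmul_eq_mul]
        field_simp
      rw [this]; ring
    rw [hzero, hr0, hr]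
    -- r x y ≤ 1
    have hent_le : ∑ j, y j * Real.log (y j) ≤ 0 := by
      apply Finset.sum_nonpos; intro j _
      have hy1 : y j ≤ 1 := by
        rw [← hsum]
        exact Finset.single_le_sum (fun k _ => hy k) (Finset.mem_univ j)
      rcases eq_or_lt_of_le (hy j) with h | h
      · simp [← h]
      · exact mul_nonpos_of_nonneg_of_nonpos (hy j)
          (Real.log_nonpos (hy j) hy1)
    have hmain : ∑ i, (∑ j, |A i j| * y j) * x i ^ 2 ≤ 1 := by
      have step1 : ∀ i, (∑ j, |A i j| * y j) * x i ^ 2 ≤ ∑ j, |A i j| * y j := by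
        intro i
        have hxi : x i ^ 2 ≤ 1 := by
          have := hx i
          rw [Set.mem_Icc] at this
          nlinarith [this.1, this.2]
        have hnn : 0 ≤ ∑ j, |A i j| * y j :=
          Finset.sum_nonneg fun j _ => mul_nonneg (abs_nonneg _) (hy j)
        nlinarith
      calc ∑ i, (∑ j, |A i j| * y j) * x i ^ 2
          ≤ ∑ i, ∑ j, |A i j| * y j := Finset.sum_le_sum fun i _ => step1 i
        _ = ∑ j, (∑ i, |A i j|) * y j := by
            rw [Finset.sum_comm]
            exact Finset.sum_congr rfl fun j _ => (Finset.sum_mul ..).symm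
        _ ≤ ∑ j, y j := Finset.sum_le_sum fun j _ => by
            nlinarith [hA j, hy j]
        _ = 1 := hsum
    nlinarith
end

section
/- Single-step regret bound for relaxed mirror prox: under (1/η)-relaxed relative Lipschitzness of g w.r.t. r, if w = argmin_{w'∈Z} ⟨ηg(z), w'⟩ + V^r_z(w') and z⁺ = argmin_{w'∈Z} ⟨(η/2)g(w), w'⟩ + V^r_z(w'), then for all u ∈ Z, η⟨g(w), w - u⟩ ≤ 2V^r_z(u) - 2V^r_{z⁺}(u). -/
/-!
The optimality condition of a prox step, combined with the three-point identity of the Bregman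
divergence, bounds `⟪v, y - u⟫` by `V x u - V y u - V x y`. Applying this to the second step at `u`
and to the first step at `zp`, and adding the relaxed relative Lipschitz bound, the terms `V z w`,
`V w zp` and `V z zp` cancel.
-/

open scoped RealInnerProductSpace

variable {E : Type*} [NormedAddCommGroup E] [InnerProductSpace ℝ E]

/-- The Bregman divergence `V_x(y)` of `r`, with `r'` playing the role of its gradient. -/
def bregmanDiv (r : E → ℝ) (r' : E → E) (x y : E) : ℝ :=
  r y - r x - ⟪r' x, y - x⟫

theorem inner_sub_eq_bregmanDiv_three_point (r : E → ℝ) (r' : E → E) (x y u : E) :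
    ⟪r' y - r' x, u - y⟫ = bregmanDiv r r' x u - bregmanDiv r r' x y - bregmanDiv r r' y u := by
  simp only [bregmanDiv, inner_sub_left, inner_sub_right]
  ring

theorem inner_le_bregmanDiv_of_prox_optimality {Z : Set E} (r : E → ℝ) (r' : E → E) {v x y u : E}
    (hy : ∀ u ∈ Z, 0 ≤ ⟪v + r' y - r' x, u - y⟫) (hu : u ∈ Z) :
    ⟪v, y - u⟫ ≤ bregmanDiv r r' x u - bregmanDiv r r' y u - bregmanDiv r r' x y := by
  have h := hy u hu
  rw [add_sub_assoc, inner_add_left, inner_sub_eq_bregmanDiv_three_point] at h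
  rw [← neg_sub u y, inner_neg_right]
  linarith

theorem relaxed_mirror_prox_step_general {n : ℕ}
    (Z : Set (EuclideanSpace ℝ (Fin n)))
    (r : EuclideanSpace ℝ (Fin n) → ℝ)
    (r' : EuclideanSpace ℝ (Fin n) → EuclideanSpace ℝ (Fin n))
    (V : EuclideanSpace ℝ (Fin n) → EuclideanSpace ℝ (Fin n) → ℝ)
    (hV : ∀ x x', V x x' = r x' - r x - ⟪r' x, x' - x⟫)
    (g : EuclideanSpace ℝ (Fin n) → EuclideanSpace ℝ (Fin n))
    (η : ℝ)
    (hrrl : ∀ z ∈ Z, ∀ z' ∈ Z, ∀ zp ∈ Z,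
      η * ⟪g z' - g z, z' - zp⟫ ≤ V z z' + V z' zp + V z zp)
    (z w zp : EuclideanSpace ℝ (Fin n))
    (hzmem : z ∈ Z) (hwmem : w ∈ Z) (hzpmem : zp ∈ Z)
    (hwopt : ∀ u ∈ Z, 0 ≤ ⟪η • g z + r' w - r' z, u - w⟫)
    (hzpopt : ∀ u ∈ Z, 0 ≤ ⟪(η / 2) • g w + r' zp - r' z, u - zp⟫) :
    ∀ u ∈ Z, η * ⟪g w, w - u⟫ ≤ 2 * V z u - 2 * V zp u := by
  intro u hu
  obtain rfl : V = bregmanDiv r r' := funext fun x => funext (hV x)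
  have hlip := hrrl z hzmem w hwmem zp hzpmem
  have hw := inner_le_bregmanDiv_of_prox_optimality r r' hwopt hzpmem
  have hzp := inner_le_bregmanDiv_of_prox_optimality r r' hzpopt hu
  have hsplit : η * ⟪g w, w - u⟫ =
      η * ⟪g w - g z, w - zp⟫ + ⟪η • g z, w - zp⟫ + 2 * ⟪(η / 2) • g w, zp - u⟫ := by
    simp only [inner_sub_left, inner_sub_right, real_inner_smul_left]
    ring
  linarith

/-- Single-step regret bound for relaxed mirror prox. -/
theorem relaxed_mirror_prox_step {n : ℕ}
    (Z : Set (EuclideanSpace ℝ (Fin n))) (hZ : Convex ℝ Z) (hZc : IsCompact Z)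
    (r : EuclideanSpace ℝ (Fin n) → ℝ)
    (r' : EuclideanSpace ℝ (Fin n) → EuclideanSpace ℝ (Fin n))
    (hconv : ConvexOn ℝ Z r)
    (hdiff : ∀ x ∈ Z, HasGradientAt r (r' x) x)
    (V : EuclideanSpace ℝ (Fin n) → EuclideanSpace ℝ (Fin n) → ℝ)
    (hV : ∀ x x', V x x' = r x' - r x - ⟪r' x, x' - x⟫)
    (g : EuclideanSpace ℝ (Fin n) → EuclideanSpace ℝ (Fin n))
    (η : ℝ) (hη : 0 < η)
    (hrrl : ∀ z ∈ Z, ∀ z' ∈ Z, ∀ zp ∈ Z,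
      η * ⟪g z' - g z, z' - zp⟫ ≤ V z z' + V z' zp + V z zp)
    (z w zp : EuclideanSpace ℝ (Fin n))
    (hzmem : z ∈ Z) (hwmem : w ∈ Z) (hzpmem : zp ∈ Z)
    (hwopt : ∀ u ∈ Z, 0 ≤ ⟪η • g z + r' w - r' z, u - w⟫)
    (hzpopt : ∀ u ∈ Z, 0 ≤ ⟪(η / 2) • g w + r' zp - r' z, u - zp⟫) :
    ∀ u ∈ Z, η * ⟪g w, w - u⟫ ≤ 2 * V z u - 2 * V zp u :=
  relaxed_mirror_prox_step_general Z r r' V hV g η hrrl z w zp hzmem hwmem hzpmem hwopt hzpopt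
end
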